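/- In the loop Inv(A) of invertible series over any unital algebra A, the left division is given by the closed formula (a\b)_n = b_n - a_n + ∑_{ℓ=1}^{n-1} (-1)^ℓ ∑_{(n_1,...,n_{ℓ+1}) composition of n} a_{n_1}( ⋯ (a_{n_{ℓ-1}}(a_{n_ℓ}(b_{n_{ℓ+1}} - a_{n_{ℓ+1}}))) ), i.e. the series c with these coefficients satisfies (a·c)_n = b_n for all n. -/

import Mathlib

/-- Cauchy product of series (coefficient sequences) over a not-necessarily-associative
unital algebra. -/
def cmul {A : Type*} [NonAssocRing A] (a b : ℕ → A) : ℕ → A :=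
  fun n => ∑ m ∈ Finset.range (n + 1), a m * b (n - m)

/-- The compositions of `n` of length `ℓ`: sequences of `ℓ` positive integers summing
to `n`. -/
def compositions (ℓ n : ℕ) : Finset (Fin ℓ → ℕ) :=
  (Finset.Nat.antidiagonalTuple ℓ n).filter fun f => ∀ i, 0 < f i

section Aux
variable {A : Type*} [NonAssocRing A] (a b : ℕ → A)

def Pterm (ℓ : ℕ) (f : Fin (ℓ+1) → ℕ) : A :=
  (List.ofFn fun i : Fin ℓ => a (f i.castSucc)).foldr (· * ·)
    (b (f (Fin.last ℓ)) - a (f (Fin.last ℓ)))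

def Tsum (ℓ n : ℕ) : A := ∑ f ∈ compositions (ℓ+1) n, Pterm a b ℓ f

lemma mem_compositions {ℓ n : ℕ} {f : Fin ℓ → ℕ} :
    f ∈ compositions ℓ n ↔ (∑ i, f i = n) ∧ ∀ i, 0 < f i := by
  simp [compositions, Finset.Nat.mem_antidiagonalTuple]

lemma Pterm_cons (ℓ : ℕ) (m : ℕ) (f : Fin (ℓ+1) → ℕ) :
    Pterm a b (ℓ+1) (Fin.cons m f) = a m * Pterm a b ℓ f := by
  have h1 : ∀ i : Fin ℓ, (Fin.cons m f : Fin (ℓ+2) → ℕ) (i.succ.castSucc) = f i.castSucc := by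
    intro i; rw [← Fin.succ_castSucc, Fin.cons_succ]
  have h2 : (Fin.cons m f : Fin (ℓ+2) → ℕ) (Fin.last (ℓ+1)) = f (Fin.last ℓ) := by
    rw [← Fin.succ_last, Fin.cons_succ]
  simp only [Pterm, List.ofFn_succ, List.foldr_cons, Fin.castSucc_zero, Fin.cons_zero, h1, h2]

lemma Tsum_eq_zero {ℓ n : ℕ} (h : n < ℓ + 1) : Tsum a b ℓ n = 0 := by
  rw [Tsum, Finset.sum_eq_zero]
  intro f hf
  rw [mem_compositions] at hf
  exfalso
  have : (Finset.univ : Finset (Fin (ℓ+1))).card • 1 ≤ ∑ i, f i :=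
    Finset.card_nsmul_le_sum _ _ _ fun i _ => hf.2 i
  simp [hf.1] at this
  omega

lemma Tsum_zero {n : ℕ} (h : 1 ≤ n) : Tsum a b 0 n = b n - a n := by
  have : compositions 1 n = {fun _ => n} := by
    ext f
    rw [mem_compositions, Finset.mem_singleton]
    constructor
    · rintro ⟨h1, -⟩
      funext i
      have : i = 0 := Subsingleton.elim _ _
      simpa [this, Fin.sum_univ_one] using h1
    · rintro rfl
      exact ⟨by simp, fun i => h⟩
  simp [Tsum, this, Pterm]

lemma Tsum_succ (ℓ n : ℕ) :
    Tsum a b (ℓ+1) n = ∑ m ∈ Finset.Icc 1 (n-1), a m * Tsum a b ℓ (n-m) := by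
  simp only [Tsum, Finset.mul_sum]
  rw [Finset.sum_sigma']
  refine Finset.sum_bij' (fun p _ => ⟨p 0, Fin.tail p⟩) (fun p _ => Fin.cons p.1 p.2)
    ?_ ?_ ?_ ?_ ?_
  · rintro f hf
    rw [mem_compositions] at hf
    obtain ⟨hsum, hpos⟩ := hf
    rw [Fin.sum_univ_succ] at hsum
    have h0 : 0 < f ((0 : Fin (ℓ+1)).succ) := hpos _
    have hle : f ((0 : Fin (ℓ+1)).succ) ≤ ∑ i : Fin (ℓ+1), f i.succ :=
      Finset.single_le_sum (f := fun i : Fin (ℓ+1) => f i.succ)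
        (fun i _ => Nat.zero_le _) (Finset.mem_univ 0)
    rw [Finset.mem_sigma, Finset.mem_Icc, mem_compositions]
    dsimp only
    have hts : ∑ i, Fin.tail f i = ∑ i : Fin (ℓ+1), f i.succ := rfl
    exact ⟨⟨hpos 0, by omega⟩, by rw [hts]; omega, fun i => hpos i.succ⟩
  · rintro ⟨m, g⟩ hp
    rw [Finset.mem_sigma, Finset.mem_Icc, mem_compositions] at hp
    obtain ⟨⟨hm1, hm2⟩, hsum, hpos⟩ := hp
    rw [mem_compositions]
    constructor
    · rw [Fin.sum_cons, hsum]; omega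
    · intro i
      refine Fin.cases ?_ ?_ i
      · exact hm1
      · intro j; simpa using hpos j
  · intro f _
    exact Fin.cons_self_tail f
  · rintro ⟨m, g⟩ _
    simp [Fin.tail_cons]
  · intro f _
    have := Pterm_cons a b ℓ (f 0) (Fin.tail f)
    rw [Fin.cons_self_tail] at this
    exact this
end Aux

section Aux2
variable {A : Type*} [NonAssocRing A] (a b : ℕ → A)

lemma key (c : ℕ → A)
    (hc : ∀ k, 0 < k → c k = b k - a k + ∑ ℓ ∈ Finset.Icc 1 (k-1), (-1:ℤ)^ℓ • Tsum a b ℓ k)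
    {n : ℕ} (hn : 0 < n) :
    ∑ m ∈ Finset.Icc 1 (n-1), a m * c (n - m)
      = - ∑ ℓ ∈ Finset.Icc 1 (n-1), (-1:ℤ)^ℓ • Tsum a b ℓ n := by
  have step1 : ∀ m ∈ Finset.Icc 1 (n-1), a m * c (n-m)
      = ∑ ℓ ∈ Finset.range (n-1), (-1:ℤ)^ℓ • (a m * Tsum a b ℓ (n-m)) := by
    intro m hm
    rw [Finset.mem_Icc] at hm
    have hnm : 0 < n - m := by omega
    have hcnm : c (n - m) = ∑ ℓ ∈ Finset.range (n-1), (-1:ℤ)^ℓ • Tsum a b ℓ (n-m) := by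
      rw [hc _ hnm]
      have e1 : n - 1 = (n-2) + 1 := by omega
      rw [e1, Finset.sum_range_succ', pow_zero, one_smul, Tsum_zero a b hnm, add_comm]
      congr 1
      have hzero : ∀ ℓ ∈ Finset.Icc 1 (n-2), ℓ ∉ Finset.Icc 1 (n-m-1) →
          ((-1:ℤ)^ℓ • Tsum a b ℓ (n-m)) = 0 := by
        intro ℓ hℓ hℓ'
        rw [Finset.mem_Icc] at hℓ hℓ'
        push_neg at hℓ'
        rw [Tsum_eq_zero a b (by omega), smul_zero]
      rw [Finset.sum_subset (Finset.Icc_subset_Icc_right (by omega : n - m - 1 ≤ n - 2)) hzero]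
      rw [← Finset.Ico_add_one_right_eq_Icc, Finset.sum_Ico_eq_sum_range]
      simp only [Nat.add_sub_cancel]
      exact Finset.sum_congr rfl fun i _ => by rw [Nat.add_comm 1 i]
    rw [hcnm, Finset.mul_sum]
    exact Finset.sum_congr rfl fun ℓ _ => mul_smul_comm _ _ _
  rw [Finset.sum_congr rfl step1, Finset.sum_comm]
  have step2 : ∀ ℓ ∈ Finset.range (n-1),
      (∑ m ∈ Finset.Icc 1 (n-1), (-1:ℤ)^ℓ • (a m * Tsum a b ℓ (n-m)))
      = (-1:ℤ)^ℓ • Tsum a b (ℓ+1) n := by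
    intro ℓ _
    rw [← Finset.smul_sum, ← Tsum_succ]
  rw [Finset.sum_congr rfl step2]
  rw [← Finset.Ico_add_one_right_eq_Icc, Finset.sum_Ico_eq_sum_range]
  simp only [Nat.add_sub_cancel]
  rw [← Finset.sum_neg_distrib]
  exact Finset.sum_congr rfl fun ℓ _ => by
    rw [Nat.add_comm 1 ℓ]
    rw [pow_succ, mul_smul, neg_one_smul, smul_neg, neg_neg]
end Aux2

/-- In the loop `Inv(A)` of invertible series over any unital algebra `A`, the left
division is given by the closed formula
`(a\b)_n = b_n - a_n + ∑_{ℓ=1}^{n-1} (-1)^ℓ ∑_{(n_1,...,n_{ℓ+1}) ⊨ n}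
  a_{n_1}( ⋯ (a_{n_{ℓ-1}}(a_{n_ℓ}(b_{n_{ℓ+1}} - a_{n_{ℓ+1}}))) )`
(products right-parenthesized): the series `c` with these coefficients satisfies
`(a·c)_n = b_n` for all `n`. -/
theorem inv_series_leftDivision_closedFormula {A : Type*} [NonAssocRing A]
    (a b c : ℕ → A) (ha : a 0 = 1) (hb : b 0 = 1) (hc0 : c 0 = 1)
    (hc : ∀ n, 0 < n → c n =
      b n - a n + ∑ ℓ ∈ Finset.Icc 1 (n - 1), (-1 : ℤ) ^ ℓ •
        ∑ f ∈ compositions (ℓ + 1) n,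
          (List.ofFn fun i : Fin ℓ => a (f i.castSucc)).foldr (· * ·)
            (b (f (Fin.last ℓ)) - a (f (Fin.last ℓ)))) :
    ∀ n, cmul a c n = b n := by
  have hc' : ∀ k, 0 < k → c k = b k - a k +
      ∑ ℓ ∈ Finset.Icc 1 (k-1), (-1:ℤ)^ℓ • Tsum a b ℓ k := hc
  intro n
  rcases Nat.eq_zero_or_pos n with rfl | hn
  · simp [cmul, ha, hc0, hb]
  · rw [cmul]
    rw [Finset.sum_range_succ', ha, one_mul, Nat.sub_zero]
    have e : ∑ i ∈ Finset.range n, a (i+1) * c (n - (i+1))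
        = ∑ m ∈ Finset.Icc 1 n, a m * c (n-m) := by
      rw [← Finset.Ico_add_one_right_eq_Icc, Finset.sum_Ico_eq_sum_range]
      simp only [Nat.add_sub_cancel]
      exact Finset.sum_congr rfl fun i _ => by rw [Nat.add_comm 1 i]
    rw [e]
    have hsplit : ∑ m ∈ Finset.Icc 1 n, a m * c (n-m)
        = ∑ m ∈ Finset.Icc 1 (n-1), a m * c (n-m) + a n * c 0 := by
      have hn1 : n - 1 + 1 = n := by omega
      conv_lhs => rw [← hn1]
      rw [Finset.sum_Icc_succ_top (by omega)]
      rw [hn1]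
      simp
    rw [hsplit, hc0, mul_one, key a b c hc' hn, hc' n hn]
    abel
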